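/- A finite abelian 2-group G of rank at most 2 is the group of units of some ring of characteristic 2 if and only if G is isomorphic to one of the following groups: the trivial group, C_2, C_4, C_2 × C_2, C_4 × C_2, C_4 × C_4, or C_8 × C_2. -/

import Mathlib

/-!
Passing to the subring generated by the units, we may assume the ring `A` commutative. In
characteristic 2, `r ↦ 1 + r` embeds the square-zero elements of `A` into the elements `g` of
`Aˣ` with `g ^ 2 = 1`, of which `C_{2^a} × C_{2^b}` has at most four, and
`(u - 1) ^ 2 ^ n = u ^ 2 ^ n - 1` turns units of `2`-power order into nilpotent elements. With at
most four square-zero elements, `x ^ 3 * k = 0` forces `x ^ 2 * k = 0` for square-zero `k`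
(otherwise `0, k, x k, x² k, k + x k` are five of them). If `x ^ m = 0` with `m ≥ 6`, applying
this to `k = x ^ (m - 3)` gives `x ^ (m - 1) = 0`; so `x ^ 5 = 0` for every nilpotent `x`, hence
`u ^ 8 = 1` for every unit and `a, b ≤ 3`.

If `a = 3`, pick `u` of order `8` and put `x = u - 1`, so that `x ^ 4 ≠ 0 = x ^ 5`. The
square-zero elements are then exactly `0, x³, x⁴, x³ + x⁴`. There are too many of them for a
cyclic unit group, so `b ≠ 0`; and for `v` of order `4` they force `(v - 1) ^ 2 ∈ {0, x⁴}`, i.e.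
`v ^ 2 ∈ {1, u ^ 4}`, which is impossible when `v` lies in the second factor, so `b < 2`.

Conversely, the seven groups are the unit groups of `𝔽₂`, of `𝔽₂[X]/(Xⁿ)` for `n = 2, 3, 5`
(where `1 + X` has order `2, 4, 8`, and `1 + X³` is a further involution for `n = 5`), and of
products of these.
-/

theorem encard_setOf_sq_eq_one_le_two (C : Type*) [Group C] [Finite C] [IsCyclic C] :
    {c : C | c ^ 2 = 1}.encard ≤ 2 := by
  classical
  have := Fintype.ofFinite C
  rw [← Finset.coe_filter_univ, Set.encard_coe_eq_coe_finsetCard]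
  exact_mod_cast IsCyclic.card_pow_eq_one_le (α := C) two_pos

theorem MulEquiv.encard_setOf_sq_eq_one {M N : Type*} [Monoid M] [Monoid N] (e : M ≃* N) :
    {g : M | g ^ 2 = 1}.encard = {h : N | h ^ 2 = 1}.encard :=
  Set.encard_congr <| e.toEquiv.subtypeEquiv fun g => by
    change g ^ 2 = 1 ↔ e g ^ 2 = 1
    rw [← map_pow, map_eq_one_iff e e.injective]

theorem setOf_sq_eq_one_prod (C D : Type*) [Monoid C] [Monoid D] :
    {g : C × D | g ^ 2 = 1} = {c : C | c ^ 2 = 1} ×ˢ {d : D | d ^ 2 = 1} := by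
  ext g; simp [Prod.ext_iff]

theorem exists_orderOf_eq_four {b : ℕ} (hb : 2 ≤ b) :
    ∃ h : Multiplicative (ZMod (2 ^ b)), orderOf h = 4 := by
  refine ⟨Multiplicative.ofAdd 1 ^ 2 ^ (b - 2), ?_⟩
  rw [orderOf_pow_of_dvd (by positivity), orderOf_ofAdd_eq_addOrderOf, ZMod.addOrderOf_one,
    Nat.pow_div (by omega) two_pos, show b - (b - 2) = 2 by omega]
  · norm_num
  · simp [Nat.pow_dvd_pow]

namespace CharTwo

variable {A : Type*} [CommRing A] [CharP A 2] {a b : ℕ}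

theorem pow_two_mul_eq_zero_of_pow_three_mul_eq_zero (hN : {r : A | r ^ 2 = 0}.encard ≤ 4)
    {x k : A} (hk : k ^ 2 = 0) (h3 : x ^ 3 * k = 0) : x ^ 2 * k = 0 := by
  by_contra h2
  have hsub : ({0, k, x * k, x ^ 2 * k, k + x * k} : Set A) ⊆ {r | r ^ 2 = 0} := by
    simp only [Set.insert_subset_iff, Set.singleton_subset_iff, Set.mem_ofPred_eq]
    refine ⟨by simp, hk, ?_, ?_, ?_⟩ <;> grind
  have hcard : ({0, k, x * k, x ^ 2 * k, k + x * k} : Set A).encard = 5 := by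
    rw [Set.encard_insert_of_notMem, Set.encard_insert_of_notMem, Set.encard_insert_of_notMem,
      Set.encard_insert_of_notMem, Set.encard_singleton]
    · norm_num
    all_goals simp only [Set.mem_insert_iff, Set.mem_singleton_iff, not_or]; grind
  have := hcard ▸ (Set.encard_le_encard hsub).trans hN
  norm_num at this

theorem pow_five_eq_zero_of_isNilpotent (hN : {r : A | r ^ 2 = 0}.encard ≤ 4) {x : A}
    (hx : IsNilpotent x) : x ^ 5 = 0 := by
  obtain ⟨m, hm⟩ := hx
  induction m with
  | zero => exact pow_eq_zero_of_le (Nat.zero_le 5) hm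
  | succ m ih =>
    rcases le_or_gt (m + 1) 5 with hm5 | hm5
    · exact pow_eq_zero_of_le hm5 hm
    · refine ih ?_
      have hk : (x ^ (m - 2)) ^ 2 = 0 := by
        rw [← pow_mul]; exact pow_eq_zero_of_le (by omega) hm
      have := pow_two_mul_eq_zero_of_pow_three_mul_eq_zero hN hk
        (by rwa [← pow_add, show 3 + (m - 2) = m + 1 by omega])
      rwa [← pow_add, show 2 + (m - 2) = m by omega] at this

theorem pow_three_pow_four_subset_setOf_sq_eq_zero {x : A} (hx5 : x ^ 5 = 0) :
    ({0, x ^ 3, x ^ 4, x ^ 3 + x ^ 4} : Set A) ⊆ {r | r ^ 2 = 0} := by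
  simp only [Set.insert_subset_iff, Set.singleton_subset_iff, Set.mem_ofPred_eq]
  refine ⟨by simp, ?_, ?_, ?_⟩ <;> grind

theorem encard_pow_three_pow_four {x : A} (hx5 : x ^ 5 = 0) (hx4 : x ^ 4 ≠ 0) :
    ({0, x ^ 3, x ^ 4, x ^ 3 + x ^ 4} : Set A).encard = 4 := by
  rw [Set.encard_insert_of_notMem, Set.encard_insert_of_notMem, Set.encard_insert_of_notMem,
    Set.encard_singleton]
  · norm_num
  all_goals simp only [Set.mem_insert_iff, Set.mem_singleton_iff, not_or]; grind

theorem mem_pow_three_pow_four_of_sq_eq_zero (hN : {r : A | r ^ 2 = 0}.encard ≤ 4) {x r : A}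
    (hx5 : x ^ 5 = 0) (hx4 : x ^ 4 ≠ 0) (hr : r ^ 2 = 0) :
    r ∈ ({0, x ^ 3, x ^ 4, x ^ 3 + x ^ 4} : Set A) := by
  by_contra hrS
  have := (Set.encard_le_encard (Set.insert_subset (t := {r : A | r ^ 2 = 0}) hr
    (pow_three_pow_four_subset_setOf_sq_eq_zero hx5))).trans hN
  rw [Set.encard_insert_of_notMem hrS, encard_pow_three_pow_four hx5 hx4] at this
  norm_num at this

theorem sq_eq_zero_or_eq_pow_four (hN : {r : A | r ^ 2 = 0}.encard ≤ 4) {x y : A}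
    (hx5 : x ^ 5 = 0) (hx4 : x ^ 4 ≠ 0) (hy : y ^ 4 = 0) : y ^ 2 = 0 ∨ y ^ 2 = x ^ 4 := by
  have hy2 := mem_pow_three_pow_four_of_sq_eq_zero hN hx5 hx4 (r := y ^ 2)
    (by rw [← pow_mul]; exact hy)
  simp only [Set.mem_insert_iff, Set.mem_singleton_iff] at hy2
  have hxy := mem_pow_three_pow_four_of_sq_eq_zero hN hx5 hx4 (r := x * y) (by grind)
  simp only [Set.mem_insert_iff, Set.mem_singleton_iff] at hxy
  -- if `y ^ 2 = x ^ 3 + c` with `c ∈ {0, x ^ 4}`, then `x ^ 4 = (x * y) * y ∈ x ^ 5 * A = 0`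
  grind

theorem encard_setOf_sq_eq_zero_le {R : Type*} [Ring R] [CharP R 2] :
    {r : R | r ^ 2 = 0}.encard ≤ {g : Rˣ | g ^ 2 = 1}.encard := by
  refine (Set.encard_le_encard fun r hr => ?_).trans
    (Set.encard_image_le (fun g : Rˣ => (g : R) - 1) _)
  have h : (1 + r) * (1 + r) = 1 := by
    rw [mul_add, mul_one, add_mul, one_mul, ← sq, Set.mem_ofPred_eq.mp hr, add_zero,
      CharTwo.add_cancel_right]
  exact ⟨⟨1 + r, 1 + r, h, h⟩, Units.ext (by simpa [sq] using h), add_sub_cancel_left 1 r⟩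

theorem units_sub_one_pow_two_pow (u : Aˣ) (n : ℕ) :
    ((u : A) - 1) ^ 2 ^ n = ((u ^ 2 ^ n : Aˣ) : A) - 1 := by
  rw [sub_pow_char_pow, one_pow, Units.val_pow_eq_pow_val]

theorem units_sub_one_pow_two_pow_eq_zero_iff (u : Aˣ) (n : ℕ) :
    ((u : A) - 1) ^ 2 ^ n = 0 ↔ u ^ 2 ^ n = 1 := by
  rw [units_sub_one_pow_two_pow, sub_eq_zero, Units.val_eq_one]

theorem encard_setOf_sq_eq_zero_le_mul {R C D : Type*} [Ring R] [CharP R 2] [Monoid C] [Monoid D]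
    (ω : Rˣ ≃* C × D) :
    {r : R | r ^ 2 = 0}.encard ≤ {c : C | c ^ 2 = 1}.encard * {d : D | d ^ 2 = 1}.encard := by
  rw [← Set.encard_prod, ← setOf_sq_eq_one_prod, ← ω.encard_setOf_sq_eq_one]
  exact encard_setOf_sq_eq_zero_le

theorem encard_setOf_sq_eq_zero_le_four
    (ω : Aˣ ≃* Multiplicative (ZMod (2 ^ a)) × Multiplicative (ZMod (2 ^ b))) :
    {r : A | r ^ 2 = 0}.encard ≤ 4 :=
  (encard_setOf_sq_eq_zero_le_mul ω).trans <| (mul_le_mul' (encard_setOf_sq_eq_one_le_two _)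
    (encard_setOf_sq_eq_one_le_two _)).trans_eq (by norm_num)

theorem sub_one_pow_five_eq_zero (hN : {r : A | r ^ 2 = 0}.encard ≤ 4) {u : Aˣ} {n : ℕ}
    (hu : u ^ 2 ^ n = 1) : ((u : A) - 1) ^ 5 = 0 :=
  pow_five_eq_zero_of_isNilpotent hN ⟨2 ^ n, (units_sub_one_pow_two_pow_eq_zero_iff u n).2 hu⟩

theorem pow_eight_eq_one
    (ω : Aˣ ≃* Multiplicative (ZMod (2 ^ a)) × Multiplicative (ZMod (2 ^ b))) (u : Aˣ) :
    u ^ 8 = 1 := by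
  have hcard : Nat.card Aˣ = 2 ^ (a + b) := by
    rw [Nat.card_congr ω.toEquiv]; simp [pow_add]
  have h5 := sub_one_pow_five_eq_zero (encard_setOf_sq_eq_zero_le_four ω)
    (hcard ▸ pow_card_eq_one' (x := u))
  exact (units_sub_one_pow_two_pow_eq_zero_iff u 3).1 (pow_eq_zero_of_le (by norm_num) h5)

theorem le_three_of_mulEquiv
    (ω : Aˣ ≃* Multiplicative (ZMod (2 ^ a)) × Multiplicative (ZMod (2 ^ b))) : a ≤ 3 := by
  have h := pow_eight_eq_one ω (ω.symm (Multiplicative.ofAdd 1, 1))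
  rw [← map_pow, map_eq_one_iff _ ω.symm.injective] at h
  have h8 : 2 ^ a ∣ 2 ^ 3 := by simpa using orderOf_dvd_of_pow_eq_one (congrArg Prod.fst h)
  exact (Nat.pow_dvd_pow_iff_le_right (by norm_num)).1 h8

theorem sub_one_pow_four_ne_zero {u : Aˣ} (hu : orderOf u = 2 ^ 3) : ((u : A) - 1) ^ 4 ≠ 0 :=
  (units_sub_one_pow_two_pow_eq_zero_iff u 2).not.2
    (pow_ne_one_of_lt_orderOf (by norm_num) (by rw [hu]; norm_num))

theorem ne_zero_of_mulEquiv
    (ω : Aˣ ≃* Multiplicative (ZMod (2 ^ 3)) × Multiplicative (ZMod (2 ^ b))) : b ≠ 0 := by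
  rintro rfl
  set u := ω.symm (Multiplicative.ofAdd 1, 1)
  have hu : orderOf u = 2 ^ 3 := by simp [u, MulEquiv.orderOf_eq, Prod.orderOf_mk]
  have hx5 := sub_one_pow_five_eq_zero (encard_setOf_sq_eq_zero_le_four ω)
    (hu ▸ pow_orderOf_eq_one u)
  have h := (Set.encard_le_encard (pow_three_pow_four_subset_setOf_sq_eq_zero hx5)).trans
    ((encard_setOf_sq_eq_zero_le_mul ω).trans (mul_le_mul' (encard_setOf_sq_eq_one_le_two _)
      (Set.encard_le_one_iff.2 fun c d _ _ => Subsingleton.elim (α := ZMod 1) c d)))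
  rw [encard_pow_three_pow_four hx5 (sub_one_pow_four_ne_zero hu)] at h
  norm_num at h

theorem lt_two_of_mulEquiv
    (ω : Aˣ ≃* Multiplicative (ZMod (2 ^ 3)) × Multiplicative (ZMod (2 ^ b))) : b < 2 := by
  by_contra! hb
  have hN := encard_setOf_sq_eq_zero_le_four ω
  set u := ω.symm (Multiplicative.ofAdd 1, 1)
  have hu : orderOf u = 2 ^ 3 := by simp [u, MulEquiv.orderOf_eq, Prod.orderOf_mk]
  obtain ⟨h, hh⟩ := exists_orderOf_eq_four hb
  set v := ω.symm (1, h)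
  have hv : orderOf v = 2 ^ 2 := by simp [v, MulEquiv.orderOf_eq, Prod.orderOf_mk, hh]
  have key := sq_eq_zero_or_eq_pow_four hN
    (sub_one_pow_five_eq_zero hN (hu ▸ pow_orderOf_eq_one u)) (sub_one_pow_four_ne_zero hu)
    ((units_sub_one_pow_two_pow_eq_zero_iff v 2).2 (hv ▸ pow_orderOf_eq_one v))
  rw [show ((v : A) - 1) ^ 2 = ((v ^ 2 : Aˣ) : A) - 1 from units_sub_one_pow_two_pow v 1,
    show ((u : A) - 1) ^ 4 = ((u ^ 4 : Aˣ) : A) - 1 from units_sub_one_pow_two_pow u 2,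
    sub_eq_zero, sub_left_inj, Units.val_eq_one, Units.val_inj] at key
  -- both `1` and `u ^ 4` have trivial second coordinate, while `v ^ 2` does not
  have hh2 : h ^ 2 = 1 := by
    rcases key with k | k <;> simpa [u, v, ← map_pow] using congrArg (fun g => (ω g).2) k
  exact pow_ne_one_of_lt_orderOf two_ne_zero (by rw [hh]; norm_num) hh2

end CharTwo

def IsCharTwoUnitGroup (G : Type*) [Mul G] : Prop :=
  ∃ (R : Type) (_ : Ring R), CharP R 2 ∧ Nonempty (Rˣ ≃* G)

namespace IsCharTwoUnitGroup

theorem of_mulEquiv {G H : Type*} [Mul G] [Mul H] (hG : IsCharTwoUnitGroup G) (e : G ≃* H) :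
    IsCharTwoUnitGroup H :=
  let ⟨R, _, hR, ⟨φ⟩⟩ := hG
  ⟨R, _, hR, ⟨φ.trans e⟩⟩

theorem prod {G H : Type*} [MulOneClass G] [MulOneClass H] (hG : IsCharTwoUnitGroup G)
    (hH : IsCharTwoUnitGroup H) :
    IsCharTwoUnitGroup (G × H) :=
  let ⟨R, _, _, ⟨φ⟩⟩ := hG
  let ⟨S, _, _, ⟨ψ⟩⟩ := hH
  ⟨R × S, inferInstance, inferInstance, ⟨MulEquiv.prodUnits.trans (φ.prodCongr ψ)⟩⟩

open scoped IsMulCommutative in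
theorem exists_commRing {G : Type*} [CommGroup G] (hG : IsCharTwoUnitGroup G) :
    ∃ (A : Type) (_ : CommRing A), CharP A 2 ∧ Nonempty (Aˣ ≃* G) := by
  obtain ⟨R, _, _, ⟨φ⟩⟩ := hG
  set S := Subring.closure (Set.range ((↑) : Rˣ → R))
  have : IsMulCommutative S := Subring.isMulCommutative_closure <| by
    rintro _ ⟨u, rfl⟩ _ ⟨v, rfl⟩
    have huv : u * v = v * u := φ.injective (by rw [map_mul, map_mul, mul_comm])
    rw [← Units.val_mul, huv, Units.val_mul]
  have hS (u : Rˣ) : (u : R) ∈ S := Subring.subset_closure ⟨u, rfl⟩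
  have hbij : Function.Bijective (Units.map (S.subtype : S →* R)) :=
    ⟨Units.map_injective Subtype.val_injective, fun u =>
      ⟨⟨⟨u, hS u⟩, ⟨↑u⁻¹, hS u⁻¹⟩, Subtype.ext u.mul_inv, Subtype.ext u.inv_mul⟩,
        Units.ext rfl⟩⟩
  exact ⟨S, inferInstance, inferInstance, ⟨(MulEquiv.ofBijective _ hbij).trans φ⟩⟩

theorem le_three_and_eq_one_of_eq_three {a b : ℕ}
    (h : IsCharTwoUnitGroup (Multiplicative (ZMod (2 ^ a)) × Multiplicative (ZMod (2 ^ b)))) :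
    a ≤ 3 ∧ (a = 3 → b = 1) := by
  obtain ⟨A, _, _, ⟨ω⟩⟩ := h.exists_commRing
  refine ⟨CharTwo.le_three_of_mulEquiv ω, ?_⟩
  rintro rfl
  have := CharTwo.ne_zero_of_mulEquiv ω
  have := CharTwo.lt_two_of_mulEquiv ω
  omega

end IsCharTwoUnitGroup

/-- `𝔽₂[X]/(Xⁿ)`, a polynomial being encoded by the binary digits of `bits`: addition is `xor`
and multiplication is carry-less. -/
structure TruncPoly (n : ℕ) where
  bits : Fin (2 ^ n)
deriving DecidableEq

namespace TruncPoly

/-- The product in `𝔽₂[X]` of the polynomial encoded by the lowest `k` bits of `a` with the one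
encoded by `b`. -/
def clmul (k a b : ℕ) : ℕ :=
  Nat.rec 0 (fun i acc => acc ^^^ bif a.testBit i then b <<< i else 0) k

theorem clmul_zero (a b : ℕ) : clmul 0 a b = 0 := rfl

theorem clmul_succ (k a b : ℕ) :
    clmul (k + 1) a b = clmul k a b ^^^ bif a.testBit k then b <<< k else 0 := rfl

theorem clmul_xor (k a b c : ℕ) : clmul k a (b ^^^ c) = clmul k a b ^^^ clmul k a c := by
  induction k with
  | zero => simp [clmul_zero]
  | succ k ih =>
    rw [clmul_succ, clmul_succ, clmul_succ, ih]
    cases a.testBit k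
    · simp
    · simp only [cond_true, Nat.shiftLeft_xor_distrib]; ac_rfl

theorem zero_clmul (k b : ℕ) : clmul k 0 b = 0 := by
  induction k with
  | zero => rfl
  | succ k ih => simp [clmul_succ, ih]

def mulBits (n a b : ℕ) : ℕ := clmul n a b % 2 ^ n

theorem mulBits_xor {n : ℕ} (a b c : ℕ) :
    mulBits n a (b ^^^ c) = mulBits n a b ^^^ mulBits n a c := by
  rw [mulBits, clmul_xor, Nat.xor_mod_two_pow]; rfl

variable {n : ℕ}

instance : Fintype (TruncPoly n) :=
  Fintype.ofEquiv (Fin (2 ^ n)) ⟨mk, bits, fun _ => rfl, fun _ => rfl⟩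

theorem ext_bits {a b : TruncPoly n} (h : a.bits.val = b.bits.val) : a = b := by
  cases a; cases b; congr; exact Fin.ext h

instance : Zero (TruncPoly n) := ⟨⟨0, by positivity⟩⟩
instance : One (TruncPoly n) := ⟨⟨1 % 2 ^ n, Nat.mod_lt _ (by positivity)⟩⟩
instance : Add (TruncPoly n) :=
  ⟨fun a b => ⟨a.bits.val ^^^ b.bits.val, Nat.xor_lt_two_pow a.bits.2 b.bits.2⟩⟩
instance : Neg (TruncPoly n) := ⟨id⟩
instance : Mul (TruncPoly n) :=
  ⟨fun a b => ⟨mulBits n a.bits b.bits, Nat.mod_lt _ (by positivity)⟩⟩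

/-- The ring structure, given the multiplicative axioms that are not proved for general `n`; for a
fixed `n` they are checked by evaluation. -/
abbrev commRing (n : ℕ)
    (mul_assoc : ∀ a < 2 ^ n, ∀ b < 2 ^ n, ∀ c < 2 ^ n,
      mulBits n (mulBits n a b) c = mulBits n a (mulBits n b c))
    (mul_comm : ∀ a < 2 ^ n, ∀ b < 2 ^ n, mulBits n a b = mulBits n b a)
    (one_mul : ∀ a < 2 ^ n, mulBits n (1 % 2 ^ n) a = a) : CommRing (TruncPoly n) :=
  have mul_comm' (a b : TruncPoly n) : a * b = b * a := ext_bits (mul_comm _ a.bits.2 _ b.bits.2)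
  have left_distrib (a b c : TruncPoly n) : a * (b + c) = a * b + a * c :=
    ext_bits (mulBits_xor _ _ _)
  have zero_mul (a : TruncPoly n) : 0 * a = 0 :=
    ext_bits (show mulBits n 0 a.bits = 0 by simp [mulBits, zero_clmul])
  { add_assoc a b c := ext_bits (Nat.xor_assoc _ _ _)
    zero_add a := ext_bits (Nat.zero_xor _)
    add_zero a := ext_bits (Nat.xor_zero _)
    add_comm a b := ext_bits (Nat.xor_comm _ _)
    neg_add_cancel a := ext_bits (Nat.xor_self _)
    nsmul := nsmulRec
    zsmul := zsmulRec
    mul_assoc a b c := ext_bits (mul_assoc _ a.bits.2 _ b.bits.2 _ c.bits.2)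
    one_mul a := ext_bits (one_mul _ a.bits.2)
    mul_one a := (mul_comm' _ _).trans (ext_bits (one_mul _ a.bits.2))
    mul_comm := mul_comm'
    left_distrib := left_distrib
    right_distrib a b c := by rw [mul_comm', left_distrib, mul_comm' a, mul_comm' b]
    zero_mul := zero_mul
    mul_zero a := (mul_comm' _ _).trans (zero_mul a) }

instance : CommRing (TruncPoly 2) := commRing 2 (by decide +kernel) (by decide) (by decide)
instance : CommRing (TruncPoly 3) := commRing 3 (by decide +kernel) (by decide) (by decide)
instance : CommRing (TruncPoly 5) := commRing 5 (by decide +kernel) (by decide) (by decide)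

instance : CharP (TruncPoly 2) 2 := CharTwo.of_one_ne_zero_of_two_eq_zero (by decide) (by decide)
instance : CharP (TruncPoly 3) 2 := CharTwo.of_one_ne_zero_of_two_eq_zero (by decide) (by decide)
instance : CharP (TruncPoly 5) 2 := CharTwo.of_one_ne_zero_of_two_eq_zero (by decide) (by decide)

def X : TruncPoly n := ⟨⟨2 % 2 ^ n, Nat.mod_lt _ (by positivity)⟩⟩

end TruncPoly

def zmodPowHom {M : Type*} [Monoid M] (n : ℕ) [NeZero n] (u : M) (hu : u ^ n = 1) :
    Multiplicative (ZMod n) →* M where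
  toFun k := u ^ k.toAdd.val
  map_one' := by simp
  map_mul' a b := by simp [ZMod.val_add, ← pow_add, ← pow_eq_pow_mod _ hu]

namespace IsCharTwoUnitGroup

open TruncPoly

theorem zmod_one : IsCharTwoUnitGroup (Multiplicative (ZMod 1)) :=
  ⟨ZMod 2, inferInstance, inferInstance, ⟨MulEquiv.ofUnique⟩⟩

theorem zmod_two : IsCharTwoUnitGroup (Multiplicative (ZMod 2)) :=
  ⟨TruncPoly 2, inferInstance, inferInstance, ⟨(MulEquiv.ofBijective
    (zmodPowHom 2 (Units.mkOfMulEqOne (1 + X) (1 + X) (by decide)) (by decide))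
    (by decide +kernel)).symm⟩⟩

theorem zmod_four : IsCharTwoUnitGroup (Multiplicative (ZMod 4)) :=
  ⟨TruncPoly 3, inferInstance, inferInstance, ⟨(MulEquiv.ofBijective
    (zmodPowHom 4 (Units.mkOfMulEqOne (1 + X) (1 + X + X ^ 2) (by decide)) (by decide +kernel))
    (by decide +kernel)).symm⟩⟩

theorem zmod_eight_prod_zmod_two :
    IsCharTwoUnitGroup (Multiplicative (ZMod 8) × Multiplicative (ZMod 2)) :=
  ⟨TruncPoly 5, inferInstance, inferInstance, ⟨(MulEquiv.ofBijective
    ((zmodPowHom 8 (Units.mkOfMulEqOne (1 + X) (1 + X + X ^ 2 + X ^ 3 + X ^ 4) (by decide))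
      (by decide +kernel)).coprod
      (zmodPowHom 2 (Units.mkOfMulEqOne (1 + X ^ 3) (1 + X ^ 3) (by decide)) (by decide)))
    (by decide +kernel)).symm⟩⟩

end IsCharTwoUnitGroup

theorem fuchs_char_two_rank_le_two_general (G : Type) [CommGroup G]
    (hrank : ∃ a b : ℕ,
      Nonempty (G ≃* Multiplicative (ZMod (2 ^ a)) × Multiplicative (ZMod (2 ^ b)))) :
    (∃ (R : Type) (_ : Ring R), CharP R 2 ∧ Nonempty (Rˣ ≃* G)) ↔
    (Nonempty (G ≃* Multiplicative (ZMod 1)) ∨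
     Nonempty (G ≃* Multiplicative (ZMod 2)) ∨
     Nonempty (G ≃* Multiplicative (ZMod 4)) ∨
     Nonempty (G ≃* Multiplicative (ZMod 2) × Multiplicative (ZMod 2)) ∨
     Nonempty (G ≃* Multiplicative (ZMod 4) × Multiplicative (ZMod 2)) ∨
     Nonempty (G ≃* Multiplicative (ZMod 4) × Multiplicative (ZMod 4)) ∨
     Nonempty (G ≃* Multiplicative (ZMod 8) × Multiplicative (ZMod 2))) := by
  open IsCharTwoUnitGroup in
  obtain ⟨a, b, ⟨ψ⟩⟩ := hrank
  refine ⟨fun (hG : IsCharTwoUnitGroup G) => ?_, ?_⟩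
  · obtain ⟨ha, hab⟩ := (hG.of_mulEquiv ψ).le_three_and_eq_one_of_eq_three
    obtain ⟨hb, hba⟩ := (hG.of_mulEquiv (ψ.trans MulEquiv.prodComm)).le_three_and_eq_one_of_eq_three
    have : Unique (Multiplicative (ZMod (2 ^ 0))) := inferInstanceAs (Unique (ZMod 1))
    interval_cases a <;> interval_cases b <;> try (exfalso; omega)
    · exact .inl ⟨ψ.trans MulEquiv.prodUnique⟩
    · exact .inr <| .inl ⟨ψ.trans MulEquiv.uniqueProd⟩
    · exact .inr <| .inr <| .inl ⟨ψ.trans MulEquiv.uniqueProd⟩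
    · exact .inr <| .inl ⟨ψ.trans MulEquiv.prodUnique⟩
    · exact .inr <| .inr <| .inr <| .inl ⟨ψ⟩
    · exact .inr <| .inr <| .inr <| .inr <| .inl ⟨ψ.trans MulEquiv.prodComm⟩
    · exact .inr <| .inr <| .inr <| .inr <| .inr <| .inr ⟨ψ.trans MulEquiv.prodComm⟩
    · exact .inr <| .inr <| .inl ⟨ψ.trans MulEquiv.prodUnique⟩
    · exact .inr <| .inr <| .inr <| .inr <| .inl ⟨ψ⟩
    · exact .inr <| .inr <| .inr <| .inr <| .inr <| .inl ⟨ψ⟩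
    · exact .inr <| .inr <| .inr <| .inr <| .inr <| .inr ⟨ψ⟩
  · rintro (e | e | e | e | e | e | e)
    · exact zmod_one.of_mulEquiv e.some.symm
    · exact zmod_two.of_mulEquiv e.some.symm
    · exact zmod_four.of_mulEquiv e.some.symm
    · exact (zmod_two.prod zmod_two).of_mulEquiv e.some.symm
    · exact (zmod_four.prod zmod_two).of_mulEquiv e.some.symm
    · exact (zmod_four.prod zmod_four).of_mulEquiv e.some.symm
    · exact zmod_eight_prod_zmod_two.of_mulEquiv e.some.symm

/-- A finite abelian 2-group of rank at most 2 is the group of units of a ring of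
characteristic 2 iff it is one of `C₁, C₂, C₄, C₂ × C₂, C₄ × C₂, C₄ × C₄, C₈ × C₂`. -/
theorem fuchs_char_two_rank_le_two (G : Type) [CommGroup G] [Fintype G]
    (hG : ∃ e : ℕ, Fintype.card G = 2 ^ e)
    (hrank : ∃ a b : ℕ,
      Nonempty (G ≃* Multiplicative (ZMod (2 ^ a)) × Multiplicative (ZMod (2 ^ b)))) :
    (∃ (R : Type) (_ : Ring R), CharP R 2 ∧ Nonempty (Rˣ ≃* G)) ↔
    (Nonempty (G ≃* Multiplicative (ZMod 1)) ∨
     Nonempty (G ≃* Multiplicative (ZMod 2)) ∨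
     Nonempty (G ≃* Multiplicative (ZMod 4)) ∨
     Nonempty (G ≃* Multiplicative (ZMod 2) × Multiplicative (ZMod 2)) ∨
     Nonempty (G ≃* Multiplicative (ZMod 4) × Multiplicative (ZMod 2)) ∨
     Nonempty (G ≃* Multiplicative (ZMod 4) × Multiplicative (ZMod 4)) ∨
     Nonempty (G ≃* Multiplicative (ZMod 8) × Multiplicative (ZMod 2))) :=
  fuchs_char_two_rank_le_two_general G hrank
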